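/- For each fixed n ≥ 1, Σ_{k=0}^{∞} c_n^{(k)} / 2^k = 2^{2n} (n!)^2 / (2n)!. -/

import Mathlib

/-- Roman harmonic number `c_n^{(k)}` as a real number. -/
noncomputable def romanHarmonic (n k : ℕ) : ℝ :=
  ∑ j ∈ Finset.Icc 1 n, (-1 : ℝ) ^ (j - 1) * (n.choose j) / (j : ℝ) ^ k

/-!
Expanding `1 / j ^ k` geometrically gives
`∑ₖ c_n^{(k)} r ^ k = ∑ⱼ (-1) ^ (j - 1) C(n, j) j / (j - r)` for `|r| < 1`.
Since `j C(n, j) = n C(n - 1, j - 1)`, this is `n` times an alternating binomial sum of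
`1 / (1 - r + k)`, i.e. a forward difference of `y ↦ 1 / y`, whose partial-fraction value
telescopes to `∏_{i=1}^n (1 - r / i)⁻¹`. At `r = 1 / 2` this is
`∏ 2i / (2i - 1) = 4 ^ n (n!)² / (2n)!`.
-/

open Finset Nat fwdDiff

@[to_additive sum_Icc_one_eq_sum_range]
theorem prod_Icc_one_eq_prod_range {M : Type*} [CommMonoid M] (f : ℕ → M) (n : ℕ) :
    ∏ i ∈ Icc 1 n, f i = ∏ k ∈ range n, f (k + 1) := by
  induction n with
  | zero => simp
  | succ n ih => rw [prod_Icc_succ_top (by omega), ih, prod_range_succ]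

section PartialFractions

variable {K : Type*} [Field K]

theorem fwdDiff_iter_inv (n : ℕ) {x : K} (hx : ∀ i ∈ range (n + 1), x + i ≠ 0) :
    (Δ_[1])^[n] (fun y : K ↦ y⁻¹) x = (-1) ^ n * n ! / ∏ i ∈ range (n + 1), (x + i) := by
  induction n generalizing x with
  | zero => simp
  | succ n ih =>
    have prod_shift (m : ℕ) :
        ∏ i ∈ range (m + 1), (x + i) = x * ∏ i ∈ range m, (x + 1 + i) := by
      simp only [prod_range_succ', cast_add, cast_one, cast_zero, add_zero, add_assoc,
        add_comm (1 : K), mul_comm x]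
    have hP := prod_ne_zero_iff.mpr hx
    rw [prod_shift, prod_range_succ, mul_ne_zero_iff, mul_ne_zero_iff] at hP
    obtain ⟨hx0, hQ, hlast⟩ := hP
    rw [Function.iterate_succ_apply', fwdDiff, ih, ih, prod_shift, prod_shift, prod_range_succ,
      factorial_succ]
    · field_simp
      push_cast
      ring
    · exact fun i hi ↦ hx i (by simp at hi ⊢; omega)
    · intro i hi
      have := hx (i + 1) (by simp at hi ⊢; omega)
      rwa [cast_succ, add_comm (i : K), ← add_assoc] at this

theorem alternating_sum_range_choose_div_add (n : ℕ) {x : K}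
    (hx : ∀ i ∈ range (n + 1), x + i ≠ 0) :
    ∑ k ∈ range (n + 1), (-1) ^ k * n.choose k / (x + k) =
      n ! / ∏ i ∈ range (n + 1), (x + i) := by
  have h := fwdDiff_iter_eq_sum_shift 1 (fun y : K ↦ y⁻¹) n x
  rw [fwdDiff_iter_inv n hx] at h
  calc _ = (-1) ^ n *
        ∑ k ∈ range (n + 1), ((-1 : ℤ) ^ (n - k) * n.choose k) • (x + k • 1)⁻¹ := by
        rw [mul_sum]
        refine sum_congr rfl fun k hk ↦ ?_
        have hsign : (-1 : K) ^ n * (-1) ^ (n - k) = (-1) ^ k := by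
          rw [← pow_add, show n + (n - k) = k + 2 * (n - k) by simp at hk; omega, pow_add,
            pow_mul]
          simp
        simp only [zsmul_eq_mul, nsmul_eq_mul, mul_one]
        push_cast
        rw [← hsign]
        ring
    _ = n ! / ∏ i ∈ range (n + 1), (x + i) := by
        rw [← h, ← mul_div_assoc, ← mul_assoc, ← mul_pow]
        norm_num

theorem alternating_sum_Icc_choose_mul_one_sub_div_inv [CharZero K] {n : ℕ} (hn : n ≠ 0)
    {r : K} (hr : ∀ i ∈ Icc 1 n, (i : K) ≠ r) :
    ∑ j ∈ Icc 1 n, (-1) ^ (j - 1) * n.choose j * (1 - r / j)⁻¹ =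
      ∏ i ∈ Icc 1 n, (1 - r / i)⁻¹ := by
  obtain ⟨m, rfl⟩ : ∃ m, n = m + 1 := ⟨n - 1, by omega⟩
  have hpole : ∀ k ∈ range (m + 1), 1 - r + k ≠ 0 := fun k hk ↦ by
    have := hr (k + 1) (by simp at hk ⊢; omega)
    push_cast at this
    contrapose! this
    linear_combination this
  have one_sub_div_inv (k : ℕ) : (1 - r / (k + 1 : ℕ))⁻¹ = (k + 1) / (1 - r + k) := by
    have hk1 : (k + 1 : K) ≠ 0 := by exact_mod_cast succ_ne_zero k
    have : 1 - r / (k + 1) = (1 - r + k) / (k + 1) := by field_simp; ring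
    rw [cast_succ, this, inv_div]
  simp only [sum_Icc_one_eq_sum_range, prod_Icc_one_eq_prod_range, one_sub_div_inv,
    prod_div_distrib]
  calc _ = (m + 1) * ∑ k ∈ range (m + 1), (-1) ^ k * m.choose k / (1 - r + k) := by
        rw [mul_sum]
        refine sum_congr rfl fun k _ ↦ ?_
        have hchoose : ((m + 1) * m.choose k : K) = (m + 1).choose (k + 1) * (k + 1) := by
          exact_mod_cast add_one_mul_choose_eq m k
        rw [add_tsub_cancel_right, div_eq_mul_inv, div_eq_mul_inv]
        linear_combination (-(-1) ^ k * (1 - r + k)⁻¹) * hchoose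
    _ = (∏ k ∈ range (m + 1), ((k : K) + 1)) / ∏ k ∈ range (m + 1), (1 - r + k) := by
        have hfact := congrArg (Nat.cast (R := K)) (prod_range_add_one_eq_factorial (m + 1))
        push_cast [factorial_succ] at hfact
        rw [alternating_sum_range_choose_div_add m hpole, ← mul_div_assoc, hfact]

end PartialFractions

theorem hasSum_romanHarmonic_mul_pow {n : ℕ} (hn : n ≠ 0) {r : ℝ} (hr : |r| < 1) :
    HasSum (fun k ↦ romanHarmonic n k * r ^ k) (∏ i ∈ Icc 1 n, (1 - r / i)⁻¹) := by
  have hgeom : ∀ j ∈ Icc 1 n, HasSum (fun k ↦ (-1) ^ (j - 1) * n.choose j * (r / j) ^ k)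
      ((-1) ^ (j - 1) * n.choose j * (1 - r / j)⁻¹) := fun j hj ↦ by
    have hj : (1 : ℝ) ≤ j := by exact_mod_cast (mem_Icc.mp hj).1
    refine (hasSum_geometric_of_abs_lt_one ?_).mul_left _
    rw [abs_div, Nat.abs_cast]
    exact (div_le_self (abs_nonneg r) hj).trans_lt hr
  have hpole : ∀ i ∈ Icc 1 n, (i : ℝ) ≠ r := fun i hi ↦ by
    have hi : (1 : ℝ) ≤ i := by exact_mod_cast (mem_Icc.mp hi).1
    linarith [le_abs_self r]
  rw [← alternating_sum_Icc_choose_mul_one_sub_div_inv hn hpole]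
  convert hasSum_sum hgeom using 2 with k
  simp only [romanHarmonic, sum_mul]
  exact sum_congr rfl fun j _ ↦ by ring

theorem prod_Icc_one_sub_half_div_inv (n : ℕ) :
    ∏ i ∈ Icc 1 n, (1 - 2⁻¹ / i : ℝ)⁻¹ = 2 ^ (2 * n) * (n ! : ℝ) ^ 2 / (2 * n)! := by
  induction n with
  | zero => simp
  | succ n ih =>
    have hodd : (2 * n + 1 : ℝ) ≠ 0 := by positivity
    have hlast : (1 - 2⁻¹ / (n + 1 : ℕ) : ℝ)⁻¹ = 2 * (n + 1) / (2 * n + 1) := by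
      rw [inv_eq_iff_eq_inv, inv_div]
      push_cast
      field_simp
      ring
    rw [prod_Icc_succ_top (by omega), ih, hlast, show 2 * (n + 1) = 2 * n + 1 + 1 by ring,
      factorial_succ (2 * n + 1), factorial_succ (2 * n), factorial_succ n]
    push_cast
    field_simp
    ring

theorem roman_harmonic_sum_half (n : ℕ) (hn : 1 ≤ n) :
    HasSum (fun k : ℕ => romanHarmonic n k / 2 ^ k)
      (2 ^ (2 * n) * (Nat.factorial n : ℝ) ^ 2 / (Nat.factorial (2 * n) : ℝ)) := by
  have h := hasSum_romanHarmonic_mul_pow (by omega : n ≠ 0) (r := 2⁻¹)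
    (by norm_num [abs_of_pos])
  rw [prod_Icc_one_sub_half_div_inv] at h
  simpa only [inv_pow, ← div_eq_mul_inv] using h
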